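/- Let M be a boolean R×C matrix, let G_M be its grid embedding, and let G'_M be the mirror image of G_M along the vertical axis with all shortcut vertices removed (its vertices corresponding to a_j and b_k denoted a'_j and b'_k). Let u ∈ {0,1}^R with u_k = 1 for at least one k, and form a graph G by adding, for each k with u_k = 1, an edge (b_k, b'_k) of weight 2(C+1)(R−k). Then for every 1 ≤ j ≤ C: the shortest-path distance between a_j and a'_{C−j+1} in G equals 4R(C+1) − 1 if there exists k with u_k = 1 and M_{k,j} = 1, and equals 4R(C+1) otherwise. (Since all weights are positive integers, subdividing every edge of G into a unit-weight path of the same total length yields an unweighted graph with the same distances.) -/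

import Mathlib

/-- Vertices of the grid embedding: `a j` (top terminals), `b i` (right terminals),
`u i j` (grid intersections), `v i j` (subdivision vertex above `u i j`),
`w i j` (subdivision vertex to the right of `u i j`), `x i j` (shortcut vertices).
Indices are 1-based natural numbers; out-of-range vertices are isolated. -/
inductive GV : Type
  | a (j : ℕ)
  | b (i : ℕ)
  | u (i j : ℕ)
  | v (i j : ℕ)
  | w (i j : ℕ)
  | x (i j : ℕ)
deriving DecidableEq

/-- One-directional edge weights of the grid embedding of a boolean `R × C` matrix `M`;
`⊤` means "no edge". -/
def dirW (R C : ℕ) (M : ℕ → ℕ → Bool) : GV → GV → ℕ∞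
  | GV.a j, GV.v i' j' =>
      if i' = 1 ∧ j' = j ∧ 1 ≤ j ∧ j ≤ C then ((2 * j - 1 : ℕ) : ℕ∞) else ⊤
  | GV.v i j, GV.u i' j' =>
      if i' = i ∧ j' = j ∧ 1 ≤ i ∧ i ≤ R ∧ 1 ≤ j ∧ j ≤ C then 1 else ⊤
  | GV.u i j, GV.v i' j' =>
      if i' = i + 1 ∧ j' = j ∧ 1 ≤ i ∧ i + 1 ≤ R ∧ 1 ≤ j ∧ j ≤ C then
        ((2 * j - 1 : ℕ) : ℕ∞) else ⊤
  | GV.u i j, GV.w i' j' =>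
      if i' = i ∧ j' = j ∧ 1 ≤ i ∧ i ≤ R ∧ 1 ≤ j ∧ j ≤ C then 2 else ⊤
  | GV.w i j, GV.u i' j' =>
      if i' = i ∧ j' = j + 1 ∧ 1 ≤ i ∧ i ≤ R ∧ 1 ≤ j ∧ j + 1 ≤ C then
        ((2 * R - 2 : ℕ) : ℕ∞) else ⊤
  | GV.w i j, GV.b i' =>
      if i' = i ∧ j = C ∧ 1 ≤ i ∧ i ≤ R ∧ 1 ≤ C then ((2 * R - 2 : ℕ) : ℕ∞) else ⊤
  | GV.v i j, GV.x i' j' =>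
      if i' = i ∧ j' = j ∧ M i j = true ∧ 1 ≤ i ∧ i ≤ R ∧ 1 ≤ j ∧ j ≤ C then 1 else ⊤
  | GV.x i j, GV.w i' j' =>
      if i' = i ∧ j' = j ∧ M i j = true ∧ 1 ≤ i ∧ i ≤ R ∧ 1 ≤ j ∧ j ≤ C then 1 else ⊤
  | _, _ => ⊤

/-- Symmetrization of a one-directional weight function. -/
noncomputable def symW {V : Type} (f : V → V → ℕ∞) : V → V → ℕ∞ := fun p q => min (f p q) (f q p)

/-- Edge weights of the grid embedding of a boolean matrix `M`. -/
noncomputable def gridW (R C : ℕ) (M : ℕ → ℕ → Bool) : GV → GV → ℕ∞ := symW (dirW R C M)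

/-- One-directional edge weights of the weighted grid embedding of an `R × C` matrix `M`
with entries in `{0, …, X}`: the grid embedding of the all-ones boolean matrix with every
weight multiplied by `X²`, and the weight of each edge `(v i j, x i j)` increased by `M i j`. -/
def dirWt (R C X : ℕ) (M : ℕ → ℕ → ℕ) : GV → GV → ℕ∞ := fun p q =>
  (X : ℕ∞) ^ 2 * dirW R C (fun _ _ => true) p q +
    (match p, q with
      | GV.v i j, GV.x i' j' => if i' = i ∧ j' = j then (M i j : ℕ∞) else 0
      | _, _ => 0)

/-- Edge weights of the weighted grid embedding of `M`. -/
noncomputable def wgridW (R C X : ℕ) (M : ℕ → ℕ → ℕ) : GV → GV → ℕ∞ := symW (dirWt R C X M)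

/-- Edge weights of the mirrored grid `G'`: the (weighted, scaled by `X²`) grid embedding
with all shortcut vertices removed.  Mirroring is a weight-preserving graph isomorphism, so
the mirrored copy is represented by the same abstract graph. -/
noncomputable def mirW (R C X : ℕ) : GV → GV → ℕ∞ :=
  fun p q => (X : ℕ∞) ^ 2 * gridW R C (fun _ _ => false) p q

/-- Total weight of a walk, given as its list of visited vertices. -/
def cost {V : Type} (W : V → V → ℕ∞) : List V → ℕ∞
  | p :: q :: l => W p q + cost W (q :: l)
  | _ => 0

/-- Shortest-path distance: the least total weight of a walk from `s` to `t`
(`⊤` if there is none; walks through a non-edge have cost `⊤`). -/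
noncomputable def gdist {V : Type} (W : V → V → ℕ∞) (s t : V) : ℕ∞ :=
  sInf {c | ∃ l : List V, l.head? = some s ∧ l.getLast? = some t ∧ cost W l = c}

/-- The unweighted (boolean) joined graph of Statement 10: a copy of the grid embedding
`G_M` (the `inl` copy), a mirrored copy with all shortcut vertices removed (the `inr`
copy), and for each `1 ≤ k ≤ R` with `u k = 1` a joining edge `(b k, b' k)` of weight
`2(C+1)(R−k)`. -/
noncomputable def joinBW (R C : ℕ) (M : ℕ → ℕ → Bool) (u : ℕ → Bool) : GV ⊕ GV → GV ⊕ GV → ℕ∞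
  | Sum.inl p, Sum.inl q => gridW R C M p q
  | Sum.inr p, Sum.inr q => gridW R C (fun _ _ => false) p q
  | Sum.inl (GV.b k), Sum.inr (GV.b k') =>
      if k' = k ∧ 1 ≤ k ∧ k ≤ R ∧ u k = true then ((2 * (C + 1) * (R - k) : ℕ) : ℕ∞) else ⊤
  | Sum.inr (GV.b k'), Sum.inl (GV.b k) =>
      if k' = k ∧ 1 ≤ k ∧ k ≤ R ∧ u k = true then ((2 * (C + 1) * (R - k) : ℕ) : ℕ∞) else ⊤
  | _, _ => ⊤

/-!
Upper bound: the walk from `a j` down column `j` to a row `k` with `u k = 1` (through the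
shortcut `x k j` if `M k j = 1`), along row `k` to `b k`, over the joining edge and then through
the mirror to `a' (C - j + 1)` has length `4R(C+1) - M k j` for every such `k`: the joining
weight `2(C+1)(R-k)` exactly makes up for the vertical cost `2(C+1)k` of the columns `j` and
`C - j + 1`.

Lower bound: if `φ q ≤ φ p + w(p,q)` along every edge, every walk from `s` to `t` has length at
least `φ t - φ s`. On `G_M` take for `φ` a lower bound on the distance from `a j` in which the
rows `i` with `d i` may use the shortcut in column `j` (no other shortcut ever helps), and on the
mirror `T` minus the same function for `a' (C - j + 1)`. The joining edge of row `k` then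
satisfies the inequality, with equality, for `T = 4R(C+1) - [d k]`. So `d ≡ 1`,
`T = 4R(C+1) - 1` always works, and `d = ¬u`, `T = 4R(C+1)` works when no row `k` with
`u k = 1` has a shortcut in column `j`.
-/

section ShortestPaths

variable {V : Type} {W : V → V → ℕ∞}

lemma cost_append_tail {l₁ l₂ : List V} {m : V} (h₁ : l₁.getLast? = some m)
    (h₂ : l₂.head? = some m) : cost W (l₁ ++ l₂.tail) = cost W l₁ + cost W l₂ := by
  obtain ⟨r, rfl⟩ : ∃ r, l₂ = m :: r := ⟨l₂.tail, by cases l₂ <;> simp_all⟩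
  induction l₁ with
  | nil => simp at h₁
  | cons x l ih =>
    cases l with
    | nil =>
      simp only [List.getLast?_singleton, Option.some.injEq] at h₁
      simp [h₁, cost]
    | cons y l =>
      rw [List.getLast?_cons_cons] at h₁
      simp only [List.cons_append, List.tail_cons, cost] at ih ⊢
      rw [ih h₁, add_assoc]

lemma cost_reverse (hW : ∀ p q, W p q = W q p) (l : List V) : cost W l.reverse = cost W l := by
  induction l with
  | nil => rfl
  | cons x l ih =>
    cases l with
    | nil => rfl
    | cons y l =>
      rw [List.reverse_cons, show [x] = [y, x].tail from rfl,
        cost_append_tail (by simp) rfl, ih]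
      simp only [cost, add_zero, hW y x, add_comm]

lemma cost_map_le {V' : Type} {W' : V' → V' → ℕ∞} (e : V → V')
    (he : ∀ p q, W' (e p) (e q) ≤ W p q) (l : List V) : cost W' (l.map e) ≤ cost W l := by
  induction l with
  | nil => exact le_rfl
  | cons x l ih =>
    cases l with
    | nil => exact le_rfl
    | cons y l => exact add_le_add (he x y) ih

lemma gdist_le_cost {s t : V} {l : List V} (hs : l.head? = some s) (ht : l.getLast? = some t) :
    gdist W s t ≤ cost W l :=
  sInf_le ⟨l, hs, ht, rfl⟩

lemma gdist_le_edge (s t : V) : gdist W s t ≤ W s t := by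
  simpa [cost] using gdist_le_cost (W := W) (l := [s, t]) rfl rfl

lemma gdist_triangle (s m t : V) : gdist W s t ≤ gdist W s m + gdist W m t := by
  unfold gdist
  rw [ENat.sInf_add]
  refine le_iInf₂ fun _ ⟨l₁, hs, hm, h₁⟩ => ?_
  rw [ENat.add_sInf]
  refine le_iInf₂ fun _ ⟨l₂, hm', ht, h₂⟩ => ?_
  rw [← h₁, ← h₂, ← cost_append_tail hm hm']
  obtain ⟨r, rfl⟩ : ∃ r, l₂ = m :: r := ⟨l₂.tail, by cases l₂ <;> simp_all⟩
  refine sInf_le ⟨_, ?_, ?_, rfl⟩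
  · cases l₁ <;> simp_all
  · cases r <;> simp_all [List.getLast?_append]

lemma gdist_le_add_edge (s m t : V) :
    gdist W s t ≤ gdist W s m + W m t :=
  (gdist_triangle s m t).trans (by gcongr; exact gdist_le_edge m t)

lemma gdist_le_edge_add (s m t : V) :
    gdist W s t ≤ W s m + gdist W m t :=
  (gdist_triangle s m t).trans (by gcongr; exact gdist_le_edge s m)

lemma gdist_comm (hW : ∀ p q, W p q = W q p) (s t : V) : gdist W s t = gdist W t s := by
  suffices ∀ s t, gdist W t s ≤ gdist W s t from le_antisymm (this t s) (this s t)
  intro s t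
  refine le_sInf fun _ ⟨l, hs, ht, hl⟩ => hl ▸ ?_
  rw [← cost_reverse hW l]
  exact gdist_le_cost (by simpa [List.head?_reverse]) (by simpa [List.getLast?_reverse])

lemma gdist_map_le {V' : Type} {W' : V' → V' → ℕ∞} (e : V → V')
    (he : ∀ p q, W' (e p) (e q) ≤ W p q) (s t : V) : gdist W' (e s) (e t) ≤ gdist W s t :=
  le_sInf fun _ ⟨l, hs, ht, hl⟩ => hl ▸ (gdist_le_cost (l := l.map e)
    (by simp [List.head?_map, hs]) (by simp [List.getLast?_map, ht])).trans (cost_map_le e he l)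

def IsFeasiblePotential (W : V → V → ℕ∞) (φ : V → ℤ) : Prop :=
  ∀ p q (n : ℕ), W p q = n → φ q ≤ φ p + n

lemma IsFeasiblePotential.le_cost {φ : V → ℤ} (hφ : IsFeasiblePotential W φ) :
    ∀ {l : List V} {s t : V} {n : ℕ}, l.head? = some s → l.getLast? = some t →
      cost W l = n → φ t ≤ φ s + n
  | [], _, _, _, hs, _, _ => by simp at hs
  | [x], s, t, n, hs, ht, _ => by simp_all
  | x :: y :: l, s, t, n, hs, ht, hc => by
    simp only [List.head?_cons, Option.some.injEq] at hs
    rw [List.getLast?_cons_cons] at ht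
    simp only [cost] at hc
    obtain ⟨hxy, hyl⟩ := WithTop.add_ne_top.mp (hc ▸ ENat.natCast_ne_top n)
    obtain ⟨a, ha⟩ := ENat.ne_top_iff_exists.mp hxy
    obtain ⟨b, hb⟩ := ENat.ne_top_iff_exists.mp hyl
    rw [← ha, ← hb] at hc
    have hab : a + b = n := by exact_mod_cast hc
    have := hφ x y a ha.symm
    have := hφ.le_cost rfl ht hb.symm
    subst hs
    omega

lemma IsFeasiblePotential.le_gdist {φ : V → ℤ} (hφ : IsFeasiblePotential W φ)
    {s t : V} {n : ℕ} (hn : (n : ℤ) ≤ φ t - φ s) : (n : ℕ∞) ≤ gdist W s t := by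
  refine le_sInf fun c ⟨l, hs, ht, hl⟩ => ?_
  induction c using ENat.recTopCoe with
  | top => exact le_top
  | coe m =>
    have := hφ.le_cost hs ht hl
    exact_mod_cast (show (n : ℤ) ≤ m by omega)

lemma abs_sub_le_of_symW {f : V → V → ℕ∞} {φ : V → ℤ}
    (hf : ∀ p q (n : ℕ), f p q = n → |φ q - φ p| ≤ n) {p q : V} {n : ℕ}
    (h : symW f p q = n) : |φ q - φ p| ≤ n := by
  rcases min_choice (f p q) (f q p) with hpq | hqp
  · exact hf p q n (by rwa [symW, hpq] at h)
  · exact abs_sub_comm (φ q) (φ p) ▸ hf q p n (by rwa [symW, hqp] at h)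

end ShortestPaths

section Grid

variable {R C : ℕ} {M : ℕ → ℕ → Bool}

lemma gridW_symm (p q : GV) : gridW R C M p q = gridW R C M q p := min_comm _ _

lemma gridW_a_v {j : ℕ} (hj : 1 ≤ j) (hjC : j ≤ C) :
    gridW R C M (.a j) (.v 1 j) = ((2 * j - 1 : ℕ) : ℕ∞) := by
  simp [gridW, symW, dirW, hj, hjC]

lemma gridW_v_u {i j : ℕ} (hi : 1 ≤ i) (hiR : i ≤ R) (hj : 1 ≤ j) (hjC : j ≤ C) :
    gridW R C M (.v i j) (.u i j) = 1 := by
  simp [gridW, symW, dirW, hi, hiR, hj, hjC]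

lemma gridW_u_v {i j : ℕ} (hi : 1 ≤ i) (hiR : i + 1 ≤ R) (hj : 1 ≤ j) (hjC : j ≤ C) :
    gridW R C M (.u i j) (.v (i + 1) j) = ((2 * j - 1 : ℕ) : ℕ∞) := by
  simp [gridW, symW, dirW, hi, hiR, hj, hjC]

lemma gridW_u_w {i j : ℕ} (hi : 1 ≤ i) (hiR : i ≤ R) (hj : 1 ≤ j) (hjC : j ≤ C) :
    gridW R C M (.u i j) (.w i j) = 2 := by
  simp [gridW, symW, dirW, hi, hiR, hj, hjC]

lemma gridW_w_u {i j : ℕ} (hi : 1 ≤ i) (hiR : i ≤ R) (hj : 1 ≤ j) (hjC : j + 1 ≤ C) :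
    gridW R C M (.w i j) (.u i (j + 1)) = ((2 * R - 2 : ℕ) : ℕ∞) := by
  simp [gridW, symW, dirW, hi, hiR, hj, hjC]

lemma gridW_w_b {i : ℕ} (hi : 1 ≤ i) (hiR : i ≤ R) (hC : 1 ≤ C) :
    gridW R C M (.w i C) (.b i) = ((2 * R - 2 : ℕ) : ℕ∞) := by
  simp [gridW, symW, dirW, hi, hiR, hC]

lemma gridW_v_x {i j : ℕ} (hM : M i j = true) (hi : 1 ≤ i) (hiR : i ≤ R) (hj : 1 ≤ j)
    (hjC : j ≤ C) : gridW R C M (.v i j) (.x i j) = 1 := by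
  simp [gridW, symW, dirW, hM, hi, hiR, hj, hjC]

lemma gridW_x_w {i j : ℕ} (hM : M i j = true) (hi : 1 ≤ i) (hiR : i ≤ R) (hj : 1 ≤ j)
    (hjC : j ≤ C) : gridW R C M (.x i j) (.w i j) = 1 := by
  simp [gridW, symW, dirW, hM, hi, hiR, hj, hjC]

lemma gdist_a_v_le {i j : ℕ} (hi : 1 ≤ i) (hiR : i ≤ R) (hj : 1 ≤ j) (hjC : j ≤ C) :
    gdist (gridW R C M) (.a j) (.v i j) ≤ ((2 * j * i - 1 : ℕ) : ℕ∞) := by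
  induction i, hi using Nat.le_induction with
  | base => simpa [gridW_a_v hj hjC] using gdist_le_edge (W := gridW R C M) (.a j) (.v 1 j)
  | succ i hi ih =>
    calc gdist (gridW R C M) (.a j) (.v (i + 1) j)
        ≤ gdist (gridW R C M) (.a j) (.v i j) + gridW R C M (.v i j) (.u i j)
          + gridW R C M (.u i j) (.v (i + 1) j) :=
          (gdist_le_add_edge _ (.u i j) _).trans (by gcongr; exact gdist_le_add_edge _ _ _)
      _ ≤ ((2 * j * i - 1 : ℕ) : ℕ∞) + 1 + ((2 * j - 1 : ℕ) : ℕ∞) := by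
          rw [gridW_v_u hi (by omega) hj hjC, gridW_u_v hi hiR hj hjC]
          gcongr
          exact ih (by omega)
      _ = ((2 * j * (i + 1) - 1 : ℕ) : ℕ∞) := by
          have : 0 < 2 * j * i := by positivity
          norm_cast
          rw [Nat.mul_succ]
          omega

lemma gdist_v_w_le_three {i j : ℕ} (hi : 1 ≤ i) (hiR : i ≤ R) (hj : 1 ≤ j) (hjC : j ≤ C) :
    gdist (gridW R C M) (.v i j) (.w i j) ≤ 3 :=
  calc _ ≤ gdist (gridW R C M) (.v i j) (.u i j) + gridW R C M (.u i j) (.w i j) :=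
        gdist_le_add_edge _ _ _
    _ ≤ 1 + 2 := by
        rw [gridW_u_w hi hiR hj hjC, ← gridW_v_u (M := M) hi hiR hj hjC]
        gcongr
        exact gdist_le_edge _ _
    _ = 3 := by norm_num

lemma gdist_v_w_le_two {i j : ℕ} (hM : M i j = true) (hi : 1 ≤ i) (hiR : i ≤ R) (hj : 1 ≤ j)
    (hjC : j ≤ C) : gdist (gridW R C M) (.v i j) (.w i j) ≤ 2 :=
  calc _ ≤ gdist (gridW R C M) (.v i j) (.x i j) + gridW R C M (.x i j) (.w i j) :=
        gdist_le_add_edge _ _ _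
    _ ≤ 1 + 1 := by
        rw [gridW_x_w hM hi hiR hj hjC, ← gridW_v_x hM hi hiR hj hjC]
        gcongr
        exact gdist_le_edge _ _
    _ = 2 := by norm_num

lemma gdist_w_b_le {i n : ℕ} (hi : 1 ≤ i) (hiR : i ≤ R) (hn : n < C) :
    gdist (gridW R C M) (.w i (C - n)) (.b i) ≤ ((2 * R - 2 + 2 * R * n : ℕ) : ℕ∞) := by
  induction n with
  | zero => simpa [gridW_w_b hi hiR hn] using gdist_le_edge (W := gridW R C M) (.w i C) (.b i)
  | succ n ih =>
    have hc : C - (n + 1) + 1 = C - n := by omega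
    calc gdist (gridW R C M) (.w i (C - (n + 1))) (.b i)
        ≤ gridW R C M (.w i (C - (n + 1))) (.u i (C - n))
          + (gridW R C M (.u i (C - n)) (.w i (C - n))
            + gdist (gridW R C M) (.w i (C - n)) (.b i)) :=
          (gdist_le_edge_add _ (.u i (C - n)) _).trans (by gcongr; exact gdist_le_edge_add _ _ _)
      _ ≤ ((2 * R - 2 : ℕ) : ℕ∞) + (2 + ((2 * R - 2 + 2 * R * n : ℕ) : ℕ∞)) := by
          rw [← hc, gridW_w_u hi hiR (by omega) (by omega), hc,
            gridW_u_w hi hiR (by omega) (by omega)]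
          gcongr
          exact ih (by omega)
      _ = ((2 * R - 2 + 2 * R * (n + 1) : ℕ) : ℕ∞) := by
          have : 1 ≤ R := by omega
          norm_cast
          rw [Nat.mul_succ]
          omega

lemma gdist_a_b_le {j k m : ℕ} (hj : 1 ≤ j) (hjC : j ≤ C) (hk : 1 ≤ k) (hkR : k ≤ R)
    (hvw : gdist (gridW R C M) (.v k j) (.w k j) ≤ m) :
    gdist (gridW R C M) (.a j) (.b k) ≤
      ((2 * j * k - 1 + m + (2 * R - 2 + 2 * R * (C - j)) : ℕ) : ℕ∞) := by
  have hwb := gdist_w_b_le (M := M) hk hkR (show C - j < C by omega)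
  rw [Nat.sub_sub_self hjC] at hwb
  calc _ ≤ gdist (gridW R C M) (.a j) (.v k j) + gdist (gridW R C M) (.v k j) (.w k j)
        + gdist (gridW R C M) (.w k j) (.b k) :=
        (gdist_triangle _ (.w k j) _).trans (by gcongr; exact gdist_triangle _ _ _)
    _ ≤ ((2 * j * k - 1 : ℕ) : ℕ∞) + m + ((2 * R - 2 + 2 * R * (C - j) : ℕ) : ℕ∞) :=
        by gcongr; exact gdist_a_v_le hk hkR hj hjC
    _ = _ := by norm_cast

end Grid

/-- On and right of column `j`: the length of the walk from `a j` down column `j` and then along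
the row, less `1` right of column `j` in the rows `i` with `d i` (the shortcut `x i j`).
Left of column `j`: the length of the walk along row `1` and then down. -/
def gridPot (R C j : ℕ) (d : ℕ → Bool) : GV → ℤ :=
  let δ : ℕ → ℤ := fun i => if d i then 1 else 0
  let φu : ℕ → ℕ → ℤ := fun i c =>
    if j ≤ c then 2 * j * i + 2 * R * (c - j) - (if c = j then 0 else δ i)
    else 2 * j + 2 * c * (i - 1) + 2 * R * (j - c)
  fun
  | .a c => if c = j then 0 else φu 1 c - 1
  | .b i => 2 * j * i + 2 * R * (C + 1 - j) - δ i
  | .u i c => φu i c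
  | .v i c => if c ≤ j then φu i c - 1 else φu i c
  | .w i c => if j ≤ c then 2 * j * i + 2 * R * (c - j) + 2 - δ i else φu i c - 2
  | .x i c => if c < j then φu i c - 1 else if c = j then φu i c else φu i c + 1

section GridPotential

variable {R C j : ℕ} {M : ℕ → ℕ → Bool} {d : ℕ → Bool}

lemma abs_gridPot_sub_le_of_dirW (hj : 1 ≤ j) (hjC : j ≤ C)
    (hd : ∀ i, 1 ≤ i → i ≤ R → M i j = true → d i = true) {p q : GV} {n : ℕ}
    (h : dirW R C M p q = n) : |gridPot R C j d q - gridPot R C j d p| ≤ n := by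
  cases p <;> cases q <;> simp only [dirW] at h <;> try exact absurd h WithTop.top_ne_coe
  all_goals split_ifs at h with hc <;> try exact absurd h WithTop.top_ne_coe
  all_goals
    obtain ⟨rfl, rfl, hc⟩ := hc
    norm_cast at h
    subst h
    simp only [gridPot, abs_le]
    -- `simp_all`: a shortcut in column `j` in a row `i` with `d i = false`, excluded by `hd`
    split_ifs <;> subst_vars <;> push_cast <;> ring_nf <;> first | omega | simp_all

lemma abs_gridPot_sub_le_of_gridW (hj : 1 ≤ j) (hjC : j ≤ C)
    (hd : ∀ i, 1 ≤ i → i ≤ R → M i j = true → d i = true) {p q : GV} {n : ℕ}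
    (h : gridW R C M p q = n) : |gridPot R C j d q - gridPot R C j d p| ≤ n :=
  abs_sub_le_of_symW (f := dirW R C M) (fun _ _ _ => abs_gridPot_sub_le_of_dirW hj hjC hd) h

end GridPotential

def joinPot (R C j : ℕ) (d : ℕ → Bool) (T : ℤ) : GV ⊕ GV → ℤ
  | .inl p => gridPot R C j d p
  | .inr p => T - gridPot R C (C - j + 1) (fun _ => false) p

section JoinedGraph

variable {R C j : ℕ} {M : ℕ → ℕ → Bool} {u d : ℕ → Bool} {T : ℤ}

lemma joinBW_inl (p q : GV) : joinBW R C M u (.inl p) (.inl q) = gridW R C M p q := by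
  cases p <;> cases q <;> rfl

lemma joinBW_inr (p q : GV) :
    joinBW R C M u (.inr p) (.inr q) = gridW R C (fun _ _ => false) p q := by
  cases p <;> cases q <;> rfl

lemma joinBW_b_b {k : ℕ} (hk : 1 ≤ k) (hkR : k ≤ R) (huk : u k = true) :
    joinBW R C M u (.inl (.b k)) (.inr (.b k)) = ((2 * (C + 1) * (R - k) : ℕ) : ℕ∞) := by
  simp [joinBW, hk, hkR, huk]

lemma gdist_joinBW_le {k m : ℕ} (hj : 1 ≤ j) (hjC : j ≤ C) (hk : 1 ≤ k) (hkR : k ≤ R)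
    (huk : u k = true) (hvw : gdist (gridW R C M) (.v k j) (.w k j) ≤ m) :
    gdist (joinBW R C M u) (.inl (.a j)) (.inr (.a (C - j + 1))) ≤
      ((4 * R * (C + 1) + m - 3 : ℕ) : ℕ∞) := by
  set c := C - j + 1 with hc
  have hmirror : gdist (joinBW R C M u) (.inr (.b k)) (.inr (.a c)) ≤
      gdist (gridW R C (fun _ _ => false)) (.a c) (.b k) := by
    rw [gdist_comm gridW_symm]
    exact gdist_map_le _ (fun p q => (joinBW_inr p q).le) _ _
  calc _ ≤ gdist (joinBW R C M u) (.inl (.a j)) (.inl (.b k))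
        + joinBW R C M u (.inl (.b k)) (.inr (.b k))
        + gdist (joinBW R C M u) (.inr (.b k)) (.inr (.a c)) :=
        (gdist_triangle _ (.inr (.b k)) _).trans (by gcongr; exact gdist_le_add_edge _ _ _)
    _ ≤ ((2 * j * k - 1 + m + (2 * R - 2 + 2 * R * (C - j)) : ℕ) : ℕ∞)
        + ((2 * (C + 1) * (R - k) : ℕ) : ℕ∞)
        + ((2 * c * k - 1 + 3 + (2 * R - 2 + 2 * R * (C - c)) : ℕ) : ℕ∞) := by
        rw [joinBW_b_b hk hkR huk]
        gcongr
        · exact (gdist_map_le _ (fun p q => (joinBW_inl p q).le) _ _).trans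
            (gdist_a_b_le hj hjC hk hkR hvw)
        · exact hmirror.trans (gdist_a_b_le (by omega) (by omega) hk hkR
            (gdist_v_w_le_three hk hkR (by omega) (by omega)))
    _ = _ := by
        norm_cast
        have hjk : 0 < 2 * j * k := by positivity
        have hck : 0 < 2 * c * k := by positivity
        have hRC : 3 ≤ 4 * R * (C + 1) + m := by nlinarith
        zify [hjC, hkR, (by omega : 2 ≤ 2 * R), hjk, hck, (by omega : c ≤ C), hRC]
        push_cast [hc, Nat.cast_sub hjC]
        ring

lemma joinPot_inr_a_sub_inl_a :
    joinPot R C j d T (.inr (.a (C - j + 1))) - joinPot R C j d T (.inl (.a j)) = T := by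
  simp [joinPot, gridPot]

lemma isFeasiblePotential_joinPot (hj : 1 ≤ j) (hjC : j ≤ C)
    (hd : ∀ i, 1 ≤ i → i ≤ R → M i j = true → d i = true)
    (hT : ∀ k, 1 ≤ k → k ≤ R → u k = true →
      T + (if d k then 1 else 0) = 4 * R * (C + 1)) :
    IsFeasiblePotential (joinBW R C M u) (joinPot R C j d T) := by
  have hjoin {k : ℕ} (hk : 1 ≤ k) (hkR : k ≤ R) (huk : u k = true) :
      joinPot R C j d T (.inr (.b k)) =
        joinPot R C j d T (.inl (.b k)) + (2 * (C + 1) * (R - k) : ℕ) := by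
    have := hT k hk hkR huk
    simp only [joinPot, gridPot]
    push_cast [Nat.cast_sub hjC, Nat.cast_sub hkR]
    linarith
  rintro (p | p) (q | q) n h
  · rw [joinBW_inl] at h
    simp only [joinPot]
    linarith [le_abs_self (gridPot R C j d q - gridPot R C j d p),
      abs_gridPot_sub_le_of_gridW hj hjC hd h]
  · cases p <;> cases q <;> simp only [joinBW] at h <;> try exact absurd h WithTop.top_ne_coe
    split_ifs at h with hc
    · obtain ⟨rfl, hk, hkR, huk⟩ := hc
      norm_cast at h
      rw [hjoin hk hkR huk, h]
    · exact absurd h WithTop.top_ne_coe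
  · cases p <;> cases q <;> simp only [joinBW] at h <;> try exact absurd h WithTop.top_ne_coe
    split_ifs at h with hc
    · obtain ⟨rfl, hk, hkR, huk⟩ := hc
      norm_cast at h
      rw [hjoin hk hkR huk, h]
      omega
    · exact absurd h WithTop.top_ne_coe
  · rw [joinBW_inr] at h
    simp only [joinPot]
    linarith [neg_abs_le (gridPot R C (C - j + 1) (fun _ => false) q
      - gridPot R C (C - j + 1) (fun _ => false) p),
      abs_gridPot_sub_le_of_gridW (j := C - j + 1) (d := fun _ => false)
        (by omega) (by omega) (by simp) h]

end JoinedGraph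

theorem joinB_dist_general (R C : ℕ)
    (M : ℕ → ℕ → Bool) (u : ℕ → Bool) (hu : ∃ k, 1 ≤ k ∧ k ≤ R ∧ u k = true)
    (j : ℕ) (hj1 : 1 ≤ j) (hjC : j ≤ C) :
    ((∃ k, 1 ≤ k ∧ k ≤ R ∧ u k = true ∧ M k j = true) →
      gdist (joinBW R C M u) (Sum.inl (GV.a j)) (Sum.inr (GV.a (C - j + 1))) =
        ((4 * R * (C + 1) - 1 : ℕ) : ℕ∞)) ∧
    ((¬ ∃ k, 1 ≤ k ∧ k ≤ R ∧ u k = true ∧ M k j = true) →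
      gdist (joinBW R C M u) (Sum.inl (GV.a j)) (Sum.inr (GV.a (C - j + 1))) =
        ((4 * R * (C + 1) : ℕ) : ℕ∞)) := by
  constructor
  · rintro ⟨k, hk, hkR, huk, hM⟩
    have hRC : 1 ≤ 4 * R * (C + 1) :=
      Nat.mul_pos (Nat.mul_pos (by norm_num) (by omega)) (by omega)
    refine le_antisymm ?_ ?_
    · simpa [show 4 * R * (C + 1) + 2 - 3 = 4 * R * (C + 1) - 1 by omega] using
        gdist_joinBW_le hj1 hjC hk hkR huk (gdist_v_w_le_two hM hk hkR hj1 hjC)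
    · refine isFeasiblePotential_joinPot (d := fun _ => true) (T := 4 * R * (C + 1) - 1) hj1 hjC
        (by simp) (by simp) |>.le_gdist ?_
      rw [joinPot_inr_a_sub_inl_a, Nat.cast_sub hRC]
      push_cast
      rfl
  · intro hno
    obtain ⟨k, hk, hkR, huk⟩ := hu
    refine le_antisymm ?_ ?_
    · simpa using gdist_joinBW_le hj1 hjC hk hkR huk (gdist_v_w_le_three hk hkR hj1 hjC)
    · refine isFeasiblePotential_joinPot (d := fun i => !u i) (T := 4 * R * (C + 1)) hj1 hjC
        (fun i hi hiR hM => ?_) (by simp_all) |>.le_gdist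
          (by rw [joinPot_inr_a_sub_inl_a]; push_cast; rfl)
      simpa using fun hui => hno ⟨i, hi, hiR, hui, hM⟩

/-- the unweighted reduction step.  If `u k = 1` for at least one
`1 ≤ k ≤ R`, then for every `1 ≤ j ≤ C` the distance between `a j` and `a' (C−j+1)` in
the joined graph is `4R(C+1) − 1` if some `k` has `u k = 1` and `M k j = 1`, and
`4R(C+1)` otherwise. -/
theorem joinB_dist (R C : ℕ) (hR : 1 ≤ R) (hC : 1 ≤ C)
    (M : ℕ → ℕ → Bool) (u : ℕ → Bool) (hu : ∃ k, 1 ≤ k ∧ k ≤ R ∧ u k = true)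
    (j : ℕ) (hj1 : 1 ≤ j) (hjC : j ≤ C) :
    ((∃ k, 1 ≤ k ∧ k ≤ R ∧ u k = true ∧ M k j = true) →
      gdist (joinBW R C M u) (Sum.inl (GV.a j)) (Sum.inr (GV.a (C - j + 1))) =
        ((4 * R * (C + 1) - 1 : ℕ) : ℕ∞)) ∧
    ((¬ ∃ k, 1 ≤ k ∧ k ≤ R ∧ u k = true ∧ M k j = true) →
      gdist (joinBW R C M u) (Sum.inl (GV.a j)) (Sum.inr (GV.a (C - j + 1))) =
        ((4 * R * (C + 1) : ℕ) : ℕ∞)) :=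
  joinB_dist_general R C M u hu j hj1 hjC
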